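/- Let (M, N, i, π, h) be a contraction of cochain complexes of K-vector spaces satisfying the side conditions h ∘ i = 0 and π ∘ h = 0, and define the degree −1 graded map h₂ := −h ∘ d_N ∘ h. Then (M, N, i, π, h₂) is again a contraction (i.e. i ∘ π − id_N = d_N ∘ h₂ + h₂ ∘ d_N), and it satisfies all three side conditions π ∘ h₂ = 0, h₂ ∘ i = 0 and h₂ ∘ h₂ = 0. -/

import Mathlib

/-!
Write `A := h ∘ d` and `B := d ∘ h` in a fixed degree, so that `P - 1 = A + B` for the idempotent
`P := i ∘ π`. The side conditions give `P A = 0 = B P`, and `A B = h d d h = 0`; expanding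
`(P - 1)² = -(P - 1)` then shows that `-A` and `-B` are orthogonal idempotents. Hence
`d h₂ + h₂ d = -(B² + A²) = A + B`, while `h₂ h₂ = h (B A) h = 0`; the side conditions for `h₂`
are inherited from those for `h`.
-/

open CategoryTheory CategoryTheory.Limits CategoryTheory.Preadditive

/-- The degree `-1` map `h₂ := -(h ∘ d_N ∘ h)`, encoded as a family of maps
`N.X p ⟶ N.X q`. -/
noncomputable def hTwo {K : Type} [Field K]
    (N : CochainComplex (ModuleCat K) ℤ)
    (h : ∀ p q : ℤ, N.X p ⟶ N.X q) (p q : ℤ) : N.X p ⟶ N.X q :=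
  -(h p (p - 1) ≫ N.d (p - 1) p ≫ h p q)

section Preadditive

variable {C : Type*} [Category C] [Preadditive C]

theorem comp_self_eq_neg_of_sub_one_eq_add {X : C} {P A B : X ⟶ X}
    (hP : P ≫ P = P) (hsum : P - 𝟙 X = A + B) (hAB : A ≫ B = 0)
    (hPA : P ≫ A = 0) (hBP : B ≫ P = 0) :
    A ≫ A = -A ∧ B ≫ B = -B ∧ B ≫ A = 0 := by
  have hA : A ≫ A + B ≫ A = -A := by
    rw [← add_comp, ← hsum, sub_comp, hPA, Category.id_comp, zero_sub]
  have hB : B ≫ A + B ≫ B = -B := by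
    rw [← comp_add, ← hsum, comp_sub, hBP, Category.comp_id, zero_sub]
  have hsq : (A + B) ≫ (A + B) = -(A + B) := by
    rw [← hsum, sub_comp, comp_sub, comp_sub, hP, Category.comp_id, Category.id_comp,
      Category.comp_id]
    abel
  have hBB : B ≫ B = -B := by
    rw [comp_add, add_comp, add_comp, hAB, zero_add, hA, neg_add] at hsq
    exact add_left_cancel hsq
  have hBA : B ≫ A = 0 := by
    rwa [hBB, add_eq_right] at hB
  refine ⟨?_, hBB, hBA⟩
  rwa [hBA, add_zero] at hA

variable {M N : CochainComplex C ℤ} {i : M ⟶ N} {π : N ⟶ M} {h : ∀ p q : ℤ, N.X p ⟶ N.X q}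

theorem contraction_hd_dh_identities (h_retract : i ≫ π = 𝟙 M)
    (h_htpy : ∀ n : ℤ,
      π.f n ≫ i.f n - 𝟙 (N.X n) = h n (n - 1) ≫ N.d (n - 1) n + N.d n (n + 1) ≫ h (n + 1) n)
    (h_hi : ∀ n : ℤ, i.f n ≫ h n (n - 1) = 0)
    (h_πh : ∀ n : ℤ, h n (n - 1) ≫ π.f (n - 1) = 0) (n : ℤ) :
    (h n (n - 1) ≫ N.d (n - 1) n) ≫ (h n (n - 1) ≫ N.d (n - 1) n)
        = -(h n (n - 1) ≫ N.d (n - 1) n) ∧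
    (N.d n (n + 1) ≫ h (n + 1) n) ≫ (N.d n (n + 1) ≫ h (n + 1) n)
        = -(N.d n (n + 1) ≫ h (n + 1) n) ∧
    (N.d n (n + 1) ≫ h (n + 1) n) ≫ (h n (n - 1) ≫ N.d (n - 1) n) = 0 := by
  have hiπ : i.f n ≫ π.f n = 𝟙 (M.X n) := by
    rw [← HomologicalComplex.comp_f, h_retract, HomologicalComplex.id_f]
  have hπh : h (n + 1) n ≫ π.f n = 0 := by
    have := h_πh (n + 1)
    rwa [add_sub_cancel_right] at this
  refine comp_self_eq_neg_of_sub_one_eq_add ?_ (h_htpy n) ?_ ?_ ?_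
  · rw [Category.assoc, reassoc_of% hiπ]
  · simp only [Category.assoc, HomologicalComplex.d_comp_d_assoc, zero_comp, comp_zero]
  · rw [Category.assoc, reassoc_of% (h_hi n), zero_comp, comp_zero]
  · rw [Category.assoc, reassoc_of% hπh, zero_comp, comp_zero]

end Preadditive

/-- Let `(M, N, i, π, h)` be a contraction of cochain complexes of `K`-vector
spaces satisfying the side conditions `h ∘ i = 0` and `π ∘ h = 0`, and set
`h₂ := -h ∘ d_N ∘ h`.  Then `h₂` is again of degree `-1`, `(M, N, i, π, h₂)`
is again a contraction, and it satisfies all three side conditions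
`π ∘ h₂ = 0`, `h₂ ∘ i = 0` and `h₂ ∘ h₂ = 0`. -/
theorem stmt5 {K : Type} [Field K]
    (M N : CochainComplex (ModuleCat K) ℤ)
    (i : M ⟶ N) (π : N ⟶ M)
    (h : ∀ p q : ℤ, N.X p ⟶ N.X q)
    (h_deg : ∀ p q : ℤ, q ≠ p - 1 → h p q = 0)
    (h_retract : i ≫ π = 𝟙 M)
    (h_htpy : ∀ n : ℤ,
      π.f n ≫ i.f n - 𝟙 (N.X n) =
        h n (n - 1) ≫ N.d (n - 1) n + N.d n (n + 1) ≫ h (n + 1) n)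
    (h_hi : ∀ n : ℤ, i.f n ≫ h n (n - 1) = 0)
    (h_πh : ∀ n : ℤ, h n (n - 1) ≫ π.f (n - 1) = 0) :
    (∀ p q : ℤ, q ≠ p - 1 → hTwo N h p q = 0) ∧
    (∀ n : ℤ,
      π.f n ≫ i.f n - 𝟙 (N.X n) =
        hTwo N h n (n - 1) ≫ N.d (n - 1) n + N.d n (n + 1) ≫ hTwo N h (n + 1) n) ∧
    (∀ n : ℤ, hTwo N h n (n - 1) ≫ π.f (n - 1) = 0) ∧
    (∀ n : ℤ, i.f n ≫ hTwo N h n (n - 1) = 0) ∧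
    (∀ n : ℤ, hTwo N h n (n - 1) ≫ hTwo N h (n - 1) (n - 2) = 0) := by
  have hd_dh := contraction_hd_dh_identities h_retract h_htpy h_hi h_πh
  refine ⟨fun p q hq => ?_, fun n => ?_, fun n => ?_, fun n => ?_, fun n => ?_⟩
  · simp only [hTwo, h_deg p q hq, comp_zero, neg_zero]
  · obtain ⟨hAA, hBB, -⟩ := hd_dh n
    rw [hTwo, hTwo, add_sub_cancel_right]
    simp only [neg_comp, comp_neg, Category.assoc] at hAA hBB ⊢
    rw [hAA, hBB, neg_neg, neg_neg, h_htpy]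
  · simp only [hTwo, neg_comp, Category.assoc, h_πh, comp_zero, neg_zero]
  · simp only [hTwo, comp_neg, reassoc_of% (h_hi n), zero_comp, neg_zero]
  · obtain ⟨-, -, hBA⟩ := hd_dh (n - 1)
    rw [sub_add_cancel, show n - 1 - 1 = n - 2 by ring] at hBA
    rw [hTwo, hTwo, show n - 1 - 1 = n - 2 by ring, neg_comp, comp_neg, neg_neg]
    simp only [Category.assoc] at hBA ⊢
    simp only [reassoc_of% hBA, zero_comp, comp_zero]
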